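/- Consider the $k$-cosymplectic Hamilton–Jacobi setting with $Q = \mathbb{R}$, $k = 2$ (or general $k$): let $H : \mathbb{R}^k\times\mathbb{R}\times\mathbb{R}^k \to \mathbb{R}$ be a $C^1$ Hamiltonian $H(x^\beta, q, p^\alpha)$, let $\gamma^\alpha : \mathbb{R}^k\times\mathbb{R} \to \mathbb{R}$ ($\alpha = 1,\ldots,k$) be $C^1$ functions of $(x, q)$, and let $\psi : U\subset\mathbb{R}^k \to \mathbb{R}$ be differentiable with $\frac{\partial\psi}{\partial x^\alpha}(x) = \frac{\partial H}{\partial p^\alpha}(x, \psi(x), \gamma^\beta(x,\psi(x)))$. Suppose the Hamilton–Jacobi condition holds: $\frac{\partial H}{\partial q} + \sum_\alpha \frac{\partial H}{\partial p^\alpha}\frac{\partial\gamma^\alpha}{\partial q} + \sum_\alpha\frac{\partial\gamma^\alpha}{\partial x^\alpha} = 0$ along $(x, \psi(x), \gamma(x,\psi(x)))$. Then the functions $p^\alpha(x) := \gamma^\alpha(x, \psi(x))$ satisfy $\sum_{\alpha=1}^k \frac{\partial p^\alpha}{\partial x^\alpha}(x) = -\frac{\partial H}{\partial q}(x, \psi(x),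 p(x))$, i.e. $(\psi, p^\alpha)$ solves the Hamilton–De Donder–Weyl equations. -/

import Mathlib

section GraphChainRule

variable {𝕜 E F G : Type*} [NontriviallyNormedField 𝕜]
  [NormedAddCommGroup E] [NormedSpace 𝕜 E] [NormedAddCommGroup F] [NormedSpace 𝕜 F]
  [NormedAddCommGroup G] [NormedSpace 𝕜 G]
  {f : E × F → G} {ψ : E → F} {x : E}

theorem fderiv_comp_graph_apply (hf : DifferentiableAt 𝕜 f (x, ψ x))
    (hψ : DifferentiableAt 𝕜 ψ x) (v : E) :
    fderiv 𝕜 (fun y => f (y, ψ y)) x v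
      = fderiv 𝕜 f (x, ψ x) (v, 0) + fderiv 𝕜 f (x, ψ x) (0, fderiv 𝕜 ψ x v) := by
  have hgraph : HasFDerivAt (fun y => (y, ψ y))
      ((ContinuousLinearMap.id 𝕜 E).prod (fderiv 𝕜 ψ x)) x :=
    (hasFDerivAt_id x).prodMk hψ.hasFDerivAt
  have hcomp : HasFDerivAt (fun y => f (y, ψ y))
      ((fderiv 𝕜 f (x, ψ x)).comp ((ContinuousLinearMap.id 𝕜 E).prod (fderiv 𝕜 ψ x))) x :=
    hf.hasFDerivAt.comp x hgraph
  rw [hcomp.fderiv, ← map_add]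
  simp

theorem fderiv_comp_graph_apply_of_scalar {f : E × 𝕜 → G} {ψ : E → 𝕜}
    (hf : DifferentiableAt 𝕜 f (x, ψ x)) (hψ : DifferentiableAt 𝕜 ψ x) (v : E) :
    fderiv 𝕜 (fun y => f (y, ψ y)) x v
      = fderiv 𝕜 f (x, ψ x) (v, 0) + fderiv 𝕜 ψ x v • fderiv 𝕜 f (x, ψ x) (0, 1) := by
  rw [fderiv_comp_graph_apply hf hψ, ← map_smul, Prod.smul_mk, smul_zero, smul_eq_mul, mul_one]

end GraphChainRule

theorem kcosymplectic_hamilton_jacobi_general (k : ℕ)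
    (Hc : ((Fin k → ℝ) × ℝ × (Fin k → ℝ)) → ℝ)
    (γ : Fin k → ((Fin k → ℝ) × ℝ → ℝ)) (hγ : ∀ α, ContDiff ℝ 1 (γ α))
    (U : Set (Fin k → ℝ))
    (ψ : (Fin k → ℝ) → ℝ) (hψ : ∀ x ∈ U, DifferentiableAt ℝ ψ x)
    (hint : ∀ x ∈ U, ∀ α : Fin k,
      fderiv ℝ ψ x (Pi.single α 1)
        = fderiv ℝ Hc (x, ψ x, fun β => γ β (x, ψ x)) (0, 0, Pi.single α 1))
    (hHJ : ∀ x ∈ U,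
      fderiv ℝ Hc (x, ψ x, fun β => γ β (x, ψ x)) (0, 1, 0)
        + (∑ α, fderiv ℝ Hc (x, ψ x, fun β => γ β (x, ψ x)) (0, 0, Pi.single α 1)
            * fderiv ℝ (γ α) (x, ψ x) (0, 1))
        + (∑ α, fderiv ℝ (γ α) (x, ψ x) (Pi.single α 1, 0)) = 0) :
    ∀ x ∈ U,
      (∑ α, fderiv ℝ (fun y => γ α (y, ψ y)) x (Pi.single α 1))
        = -fderiv ℝ Hc (x, ψ x, fun β => γ β (x, ψ x)) (0, 1, 0) := by
  intro x hx
  have hγx (α : Fin k) : DifferentiableAt ℝ (γ α) (x, ψ x) :=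
    (hγ α).differentiable one_ne_zero _
  calc (∑ α, fderiv ℝ (fun y => γ α (y, ψ y)) x (Pi.single α 1))
      = ∑ α, (fderiv ℝ (γ α) (x, ψ x) (Pi.single α 1, 0)
          + fderiv ℝ Hc (x, ψ x, fun β => γ β (x, ψ x)) (0, 0, Pi.single α 1)
            * fderiv ℝ (γ α) (x, ψ x) (0, 1)) := by
        refine Finset.sum_congr rfl fun α _ => ?_
        rw [fderiv_comp_graph_apply_of_scalar (hγx α) (hψ x hx), hint x hx α, smul_eq_mul]
    _ = -fderiv ℝ Hc (x, ψ x, fun β => γ β (x, ψ x)) (0, 1, 0) := by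
        rw [Finset.sum_add_distrib]
        linarith [hHJ x hx]

theorem kcosymplectic_hamilton_jacobi (k : ℕ)
    (Hc : ((Fin k → ℝ) × ℝ × (Fin k → ℝ)) → ℝ) (hH : ContDiff ℝ 1 Hc)
    (γ : Fin k → ((Fin k → ℝ) × ℝ → ℝ)) (hγ : ∀ α, ContDiff ℝ 1 (γ α))
    (U : Set (Fin k → ℝ)) (hU : IsOpen U)
    (ψ : (Fin k → ℝ) → ℝ) (hψ : ∀ x ∈ U, DifferentiableAt ℝ ψ x)
    (hint : ∀ x ∈ U, ∀ α : Fin k,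
      fderiv ℝ ψ x (Pi.single α 1)
        = fderiv ℝ Hc (x, ψ x, fun β => γ β (x, ψ x)) (0, 0, Pi.single α 1))
    (hHJ : ∀ x ∈ U,
      fderiv ℝ Hc (x, ψ x, fun β => γ β (x, ψ x)) (0, 1, 0)
        + (∑ α, fderiv ℝ Hc (x, ψ x, fun β => γ β (x, ψ x)) (0, 0, Pi.single α 1)
            * fderiv ℝ (γ α) (x, ψ x) (0, 1))
        + (∑ α, fderiv ℝ (γ α) (x, ψ x) (Pi.single α 1, 0)) = 0) :
    ∀ x ∈ U,
      (∑ α, fderiv ℝ (fun y => γ α (y, ψ y)) x (Pi.single α 1))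
        = -fderiv ℝ Hc (x, ψ x, fun β => γ β (x, ψ x)) (0, 1, 0) :=
  kcosymplectic_hamilton_jacobi_general k Hc γ hγ U ψ hψ hint hHJ
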